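/- arXiv:1805.02945 — 5 statements merged into one kernel-verified Lean document; each statement's English description precedes it below -/
import Mathlib

section
/- Let k ≥ 1 and let t₁, t₂, …, t_k be positive integers. Then there exists a family (x_J) of positive integers indexed by the nonempty subsets J of {1,…,k} such that: (i) for every i ∈ {1,…,k}, t_i = ∏_{J : i ∈ J} x_J, and (ii) for all nonempty subsets J, K with J ⊄ K and K ⊄ J, gcd(x_J, x_K) = 1. -/
/-!
For each prime `p`, the sets `S_v = {i | p ^ v ∣ t i}` (`v ≥ 1`) form a decreasing chain, and the
exponent of `p` in `t i` is the number of levels `v` with `i ∈ S_v`. Giving each level `v` to the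
index set `S_v`, i.e. letting `p` occur in `x J` with multiplicity `#{v ≥ 1 | S_v = J}`, yields
`t i = ∏_{J ∋ i} x J`; and if `p` divides both `x J` and `x K`, then `J` and `K` are two members
of one chain, hence comparable.
-/

open Finset

section Levels

variable {ι : Type*} [Fintype ι]

def superlevelSet (e : ι → ℕ) (v : ℕ) : Finset ι :=
  univ.filter fun i => v ≤ e i

def levelMultiplicity [DecidableEq ι] (e : ι → ℕ) (J : Finset ι) : ℕ :=
  #{v ∈ Icc 1 (univ.sup e) | superlevelSet e v = J}

theorem superlevelSet_antitone (e : ι → ℕ) : Antitone (superlevelSet e) := by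
  intro v w hvw i
  simp only [superlevelSet, mem_filter, mem_univ, true_and]
  exact hvw.trans

theorem sum_levelMultiplicity [DecidableEq ι] (e : ι → ℕ) (i : ι) :
    ∑ J ∈ univ.filter (fun J : Finset ι => i ∈ J), levelMultiplicity e J = e i := by
  have hlevels : {v ∈ Icc 1 (univ.sup e) | i ∈ superlevelSet e v} = Icc 1 (e i) := by
    ext v
    simp only [superlevelSet, mem_filter, mem_Icc, mem_univ, true_and]
    have := le_sup (f := e) (mem_univ i)
    omega
  have hmaps : Set.MapsTo (superlevelSet e) ↑{v ∈ Icc 1 (univ.sup e) | i ∈ superlevelSet e v}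
      ↑(univ.filter fun J : Finset ι => i ∈ J) := by
    intro v hv
    simpa using (mem_filter.1 hv).2
  calc ∑ J ∈ univ.filter (fun J : Finset ι => i ∈ J), levelMultiplicity e J
      = #{v ∈ Icc 1 (univ.sup e) | i ∈ superlevelSet e v} := by
        rw [card_eq_sum_card_fiberwise hmaps]
        refine sum_congr rfl fun J hJ => ?_
        rw [filter_filter, levelMultiplicity]
        congr 1
        refine filter_congr fun v _ => ⟨fun hv => ⟨hv ▸ (mem_filter.1 hJ).2, hv⟩, And.right⟩
    _ = e i := by rw [hlevels, Nat.card_Icc, Nat.add_sub_cancel]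

theorem subset_or_subset_of_levelMultiplicity_ne_zero [DecidableEq ι] {e : ι → ℕ} {J K : Finset ι}
    (hJ : levelMultiplicity e J ≠ 0) (hK : levelMultiplicity e K ≠ 0) : J ⊆ K ∨ K ⊆ J := by
  obtain ⟨v, -, rfl⟩ := filter_nonempty_iff.1 (card_ne_zero.1 hJ)
  obtain ⟨w, -, rfl⟩ := filter_nonempty_iff.1 (card_ne_zero.1 hK)
  rcases le_total v w with hvw | hwv
  · exact Or.inr (superlevelSet_antitone e hvw)
  · exact Or.inl (superlevelSet_antitone e hwv)

end Levels

section LevelFactor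

variable {ι : Type*} [Fintype ι] [DecidableEq ι]

def levelFactor (t : ι → ℕ) (J : Finset ι) : ℕ :=
  ∏ p ∈ univ.biUnion (fun i => (t i).primeFactors),
    p ^ levelMultiplicity (fun i => (t i).factorization p) J

theorem levelFactor_pos (t : ι → ℕ) (J : Finset ι) : 0 < levelFactor t J :=
  prod_pos fun p hp => by
    obtain ⟨i, -, hpi⟩ := mem_biUnion.1 hp
    exact pow_pos (Nat.pos_of_mem_primeFactors hpi) _

theorem prod_levelFactor {t : ι → ℕ} (ht : ∀ i, t i ≠ 0) (i : ι) :
    ∏ J ∈ univ.filter (fun J : Finset ι => i ∈ J), levelFactor t J = t i := by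
  have hsupp : (t i).factorization.support ⊆ univ.biUnion (fun i => (t i).primeFactors) := by
    rw [Nat.support_factorization]
    exact subset_biUnion_of_mem (fun j => (t j).primeFactors) (mem_univ i)
  calc ∏ J ∈ univ.filter (fun J : Finset ι => i ∈ J), levelFactor t J
      = ∏ p ∈ univ.biUnion (fun i => (t i).primeFactors), p ^ (t i).factorization p := by
        simp only [levelFactor]
        rw [prod_comm]
        refine prod_congr rfl fun p _ => ?_
        rw [prod_pow_eq_pow_sum, sum_levelMultiplicity]
    _ = t i := by
        rw [← Finsupp.prod_of_support_subset _ hsupp _ (fun _ _ => pow_zero _),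
          Nat.prod_factorization_pow_eq_self (ht i)]

theorem coprime_levelFactor (t : ι → ℕ) {J K : Finset ι} (hJK : ¬ J ⊆ K) (hKJ : ¬ K ⊆ J) :
    Nat.Coprime (levelFactor t J) (levelFactor t K) := by
  refine Nat.Coprime.prod_left fun p hp => Nat.Coprime.prod_right fun q hq => ?_
  have hprime : ∀ r ∈ univ.biUnion (fun i => (t i).primeFactors), r.Prime := fun r hr => by
    obtain ⟨i, -, hri⟩ := mem_biUnion.1 hr
    exact Nat.prime_of_mem_primeFactors hri
  by_cases hpq : p = q
  · subst hpq
    by_cases hJ : levelMultiplicity (fun i => (t i).factorization p) J = 0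
    · rw [hJ, pow_zero]
      exact Nat.coprime_one_left _
    · by_cases hK : levelMultiplicity (fun i => (t i).factorization p) K = 0
      · rw [hK, pow_zero]
        exact Nat.coprime_one_right _
      · exact ((subset_or_subset_of_levelMultiplicity_ne_zero hJ hK).elim hJK hKJ).elim
  · exact Nat.Coprime.pow _ _ ((Nat.coprime_primes (hprime p hp) (hprime q hq)).2 hpq)

end LevelFactor

theorem stmt_12_general (k : ℕ) (t : Fin k → ℕ) (ht : ∀ i, 0 < t i) :
    ∃ x : Finset (Fin k) → ℕ,
      (∀ J : Finset (Fin k), J.Nonempty → 0 < x J) ∧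
      (∀ i : Fin k, t i = ∏ J ∈ Finset.univ.filter (fun J : Finset (Fin k) => i ∈ J), x J) ∧
      (∀ J K : Finset (Fin k), J.Nonempty → K.Nonempty → ¬ J ⊆ K → ¬ K ⊆ J →
        Nat.gcd (x J) (x K) = 1) :=
  ⟨levelFactor t, fun J _ => levelFactor_pos t J,
    fun i => (prod_levelFactor (fun i => (ht i).ne') i).symm,
    fun _ _ _ _ hJK hKJ => coprime_levelFactor t hJK hKJ⟩

theorem stmt_12 (k : ℕ) (hk : 1 ≤ k) (t : Fin k → ℕ) (ht : ∀ i, 0 < t i) :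
    ∃ x : Finset (Fin k) → ℕ,
      (∀ J : Finset (Fin k), J.Nonempty → 0 < x J) ∧
      (∀ i : Fin k, t i = ∏ J ∈ Finset.univ.filter (fun J : Finset (Fin k) => i ∈ J), x J) ∧
      (∀ J K : Finset (Fin k), J.Nonempty → K.Nonempty → ¬ J ⊆ K → ¬ K ⊆ J →
        Nat.gcd (x J) (x K) = 1) :=
  stmt_12_general k t ht
end

section
/- For every ε > 0 there exists a constant C = C(ε) > 0 such that for all positive integers m and n, the number of pairs (a₁, a₂) of positive integers with a₁ ≤ a₂ and m/n = 1/a₁ + 1/a₂ is at most C · n^ε; that is, f₂(m,n) ≤ C n^ε. -/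
/-- `numSols k m n` is the number of nondecreasing `k`-tuples of positive integers
`(a₁, …, a_k)` with `m / n = 1/a₁ + ⋯ + 1/a_k`. -/
noncomputable def numSols (k m n : ℕ) : ℕ :=
  Nat.card {a : Fin k → ℕ // (∀ i, 0 < a i) ∧ Monotone a ∧
    (m : ℚ) / n = ∑ i, (1 : ℚ) / a i}

/-- Per-prime inequality for the divisor bound. -/
lemma per_prime (K : ℕ) (hK : 1 ≤ K) (ε : ℝ) (hε : 0 < ε) (hKε : 1 ≤ (K : ℝ) * ε)
    (p α : ℕ) (hp : 2 ≤ p) :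
    ((α : ℝ) + 1) ≤ (if p < 2 ^ K then ((K : ℝ) + 1) else 1) * (p : ℝ) ^ ((α : ℝ) * ε) := by
  have h2p : (2 : ℝ) ≤ (p : ℝ) := by exact_mod_cast hp
  have hαε : 0 ≤ (α : ℝ) * ε := by positivity
  have h2 : (2 : ℝ) ^ ((α : ℝ) * ε) ≤ (p : ℝ) ^ ((α : ℝ) * ε) :=
    Real.rpow_le_rpow (by norm_num) h2p hαε
  split_ifs with h
  · -- small prime case
    set q := α / K with hq
    have hqK : q * K ≤ α := Nat.div_mul_le_self α K
    have hmod : K * q + α % K = α := Nat.div_add_mod α K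
    have hr : α % K < K := Nat.mod_lt _ (by omega)
    have h1 : (α + 1 : ℕ) ≤ (K + 1) * (q + 1) := by nlinarith [hmod, hr]
    have h2' : ((q : ℝ) + 1) ≤ (2 : ℝ) ^ ((α : ℝ) * ε) := by
      have hq2 : ((q : ℝ) + 1) ≤ (2 : ℝ) ^ (q : ℝ) := by
        rw [Real.rpow_natCast]
        exact_mod_cast Nat.lt_two_pow_self (n := q)
      refine hq2.trans ?_
      apply Real.rpow_le_rpow_left_iff (by norm_num : (1:ℝ) < 2) |>.2
      calc (q : ℝ) = (q : ℝ) * 1 := by ring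
        _ ≤ (q : ℝ) * ((K : ℝ) * ε) := by
            exact mul_le_mul_of_nonneg_left hKε (Nat.cast_nonneg q)
        _ = ((q * K : ℕ) : ℝ) * ε := by push_cast; ring
        _ ≤ (α : ℝ) * ε := by
            apply mul_le_mul_of_nonneg_right _ hε.le
            exact_mod_cast hqK
    calc ((α : ℝ) + 1) = ((α + 1 : ℕ) : ℝ) := by push_cast; ring
      _ ≤ (((K + 1) * (q + 1) : ℕ) : ℝ) := by exact_mod_cast h1
      _ = ((K : ℝ) + 1) * ((q : ℝ) + 1) := by push_cast; ring
      _ ≤ ((K : ℝ) + 1) * (2 : ℝ) ^ ((α : ℝ) * ε) := by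
          apply mul_le_mul_of_nonneg_left h2' (by positivity)
      _ ≤ ((K : ℝ) + 1) * (p : ℝ) ^ ((α : ℝ) * ε) := by
          apply mul_le_mul_of_nonneg_left h2 (by positivity)
  · -- large prime case: 2^K ≤ p
    push_neg at h
    rw [one_mul]
    have hα2 : ((α : ℝ) + 1) ≤ (2 : ℝ) ^ (α : ℝ) := by
      rw [Real.rpow_natCast]
      exact_mod_cast Nat.lt_two_pow_self (n := α)
    refine hα2.trans ?_
    have hstep : (2 : ℝ) ^ (α : ℝ) ≤ (2 : ℝ) ^ ((K : ℝ) * ((α : ℝ) * ε)) := by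
      apply Real.rpow_le_rpow_left_iff (by norm_num : (1:ℝ) < 2) |>.2
      calc (α : ℝ) = (α : ℝ) * 1 := by ring
        _ ≤ (α : ℝ) * ((K : ℝ) * ε) := mul_le_mul_of_nonneg_left hKε (Nat.cast_nonneg α)
        _ = (K : ℝ) * ((α : ℝ) * ε) := by ring
    refine hstep.trans ?_
    rw [Real.rpow_mul (by norm_num : (0:ℝ) ≤ 2)]
    apply Real.rpow_le_rpow (by positivity) _ hαε
    rw [Real.rpow_natCast]
    exact_mod_cast h

/-- Divisor bound: `d(n) ≤ C(ε) · n^ε`. -/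
lemma divisor_bound (ε : ℝ) (hε : 0 < ε) : ∃ C : ℝ, 0 < C ∧
    ∀ n : ℕ, 0 < n → ((n.divisors.card : ℝ)) ≤ C * (n : ℝ) ^ ε := by
  set K := ⌈1 / ε⌉₊ with hKdef
  have hK : 1 ≤ K := Nat.ceil_pos.2 (by positivity)
  have hKε : 1 ≤ (K : ℝ) * ε := by
    have h1 : 1 / ε ≤ (K : ℝ) := Nat.le_ceil _
    calc (1 : ℝ) = (1 / ε) * ε := by field_simp
      _ ≤ (K : ℝ) * ε := by apply mul_le_mul_of_nonneg_right h1 hε.le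
  refine ⟨((K : ℝ) + 1) ^ (2 ^ K), by positivity, ?_⟩
  intro n hn
  have hn0 : n ≠ 0 := hn.ne'
  have hcard : n.divisors.card = ∏ p ∈ n.primeFactors, (n.factorization p + 1) :=
    Nat.card_divisors hn0
  have hprod : ∏ p ∈ n.primeFactors, p ^ n.factorization p = n := by
    rw [← Nat.support_factorization]
    exact Nat.factorization_prod_pow_eq_self hn0
  have hnε : (n : ℝ) ^ ε = ∏ p ∈ n.primeFactors, (p : ℝ) ^ ((n.factorization p : ℝ) * ε) := by
    conv_lhs => rw [← hprod]
    push_cast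
    rw [← Real.finset_prod_rpow _ _ (fun p _ => by positivity) ε]
    apply Finset.prod_congr rfl
    intro p hp
    rw [← Real.rpow_natCast (p : ℝ) (n.factorization p),
      ← Real.rpow_mul (Nat.cast_nonneg p)]
  have hW : (∏ p ∈ n.primeFactors, (if p < 2 ^ K then ((K : ℝ) + 1) else 1))
      ≤ ((K : ℝ) + 1) ^ (2 ^ K) := by
    rw [Finset.prod_ite]
    rw [Finset.prod_const, Finset.prod_const, one_pow, mul_one]
    apply pow_le_pow_right₀ (by simp)
    calc (n.primeFactors.filter (fun p => p < 2 ^ K)).card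
        ≤ (Finset.range (2 ^ K)).card := by
          apply Finset.card_le_card
          intro p hp
          simp only [Finset.mem_filter] at hp
          exact Finset.mem_range.2 hp.2
      _ = 2 ^ K := Finset.card_range _
  calc (n.divisors.card : ℝ)
      = ∏ p ∈ n.primeFactors, ((n.factorization p : ℝ) + 1) := by
        rw [hcard]; push_cast; rfl
    _ ≤ ∏ p ∈ n.primeFactors,
          ((if p < 2 ^ K then ((K : ℝ) + 1) else 1) * (p : ℝ) ^ ((n.factorization p : ℝ) * ε)) := by
        apply Finset.prod_le_prod
        · intro p _; positivity
        · intro p hp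
          exact per_prime K hK ε hε hKε p _ (Nat.prime_of_mem_primeFactors hp).two_le
    _ = (∏ p ∈ n.primeFactors, (if p < 2 ^ K then ((K : ℝ) + 1) else 1))
          * ∏ p ∈ n.primeFactors, (p : ℝ) ^ ((n.factorization p : ℝ) * ε) :=
        Finset.prod_mul_distrib
    _ ≤ ((K : ℝ) + 1) ^ (2 ^ K) * (n : ℝ) ^ ε := by
        rw [hnε]
        apply mul_le_mul_of_nonneg_right hW
        apply Finset.prod_nonneg
        intro p _; positivity

/-- Key arithmetic facts about a solution. -/
lemma sol_facts (m n : ℕ) (hm : 0 < m) (hn : 0 < n) (a : Fin 2 → ℕ)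
    (hpos : ∀ i, 0 < a i)
    (heq : (m : ℚ) / n = ∑ i, (1 : ℚ) / a i) :
    n < m * a 0 ∧ (m * a 0 - n) ∣ n ^ 2 ∧ (m * a 0 - n) * a 1 = n * a 0 := by
  have h0 : (0 : ℚ) < (a 0 : ℚ) := by exact_mod_cast hpos 0
  have h1 : (0 : ℚ) < (a 1 : ℚ) := by exact_mod_cast hpos 1
  have hnq : (0 : ℚ) < (n : ℚ) := by exact_mod_cast hn
  rw [Fin.sum_univ_two] at heq
  have hE : (m : ℚ) * a 0 * a 1 = n * a 0 + n * a 1 := by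
    field_simp at heq
    linarith [heq]
  have hEN : m * a 0 * a 1 = n * a 0 + n * a 1 := by exact_mod_cast hE
  have hlt : n < m * a 0 := by
    have ha1 : 0 < a 1 := hpos 1
    have h' : n * a 1 < (m * a 0) * a 1 := by
      have : 0 < n * a 0 := Nat.mul_pos hn (hpos 0)
      omega
    exact Nat.lt_of_mul_lt_mul_right h'
  have hlt1 : n < m * a 1 := by
    have ha0 : 0 < a 0 := hpos 0
    have h'' : a 0 * (m * a 1) = n * a 0 + n * a 1 := by
      rw [show a 0 * (m * a 1) = m * a 0 * a 1 by ring, hEN]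
    have h' : a 0 * n < a 0 * (m * a 1) := by
      rw [h'', mul_comm (a 0) n]
      have : 0 < n * a 1 := Nat.mul_pos hn (hpos 1)
      omega
    exact Nat.lt_of_mul_lt_mul_left h'
  refine ⟨hlt, ?_, ?_⟩
  · refine ⟨m * a 1 - n, ?_⟩
    have hZ : ((m : ℤ) * a 0 - n) * ((m : ℤ) * a 1 - n) = (n : ℤ) ^ 2 := by
      have hEZ : (m : ℤ) * a 0 * a 1 = n * a 0 + n * a 1 := by exact_mod_cast hEN
      linear_combination (m : ℤ) * hEZ
    have := hZ.symm
    zify [hlt.le, hlt1.le]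
    linarith [hZ]
  · have hsub : (m * a 0 - n) * a 1 = m * a 0 * a 1 - n * a 1 := Nat.sub_mul _ _ _
    rw [hsub, hEN]
    omega

/-- The number of solutions is at most the number of divisors of `n²`. -/
lemma numSols_le_divisors (m n : ℕ) (hm : 0 < m) (hn : 0 < n) :
    numSols 2 m n ≤ (n ^ 2).divisors.card := by
  rw [numSols, ← Nat.card_eq_finsetCard]
  have hn2 : n ^ 2 ≠ 0 := by positivity
  apply Nat.card_le_card_of_injective
    (f := fun x : {a : Fin 2 → ℕ // (∀ i, 0 < a i) ∧ Monotone a ∧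
        (m : ℚ) / n = ∑ i, (1 : ℚ) / a i} =>
      (⟨m * x.1 0 - n, by
        obtain ⟨hlt, hdvd, _⟩ := sol_facts m n hm hn x.1 x.2.1 x.2.2.2
        exact Nat.mem_divisors.2 ⟨hdvd, hn2⟩⟩ : {d // d ∈ (n ^ 2).divisors}))
  rintro ⟨a, ha⟩ ⟨b, hb⟩ hab
  simp only [Subtype.mk.injEq] at hab
  obtain ⟨hlta, hdvda, hkeya⟩ := sol_facts m n hm hn a ha.1 ha.2.2
  obtain ⟨hltb, hdvdb, hkeyb⟩ := sol_facts m n hm hn b hb.1 hb.2.2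
  have h0 : a 0 = b 0 := by
    have : m * a 0 = m * b 0 := by omega
    exact Nat.eq_of_mul_eq_mul_left hm this
  have h1 : a 1 = b 1 := by
    rw [h0] at hkeya hlta
    have hd : 0 < m * b 0 - n := by omega
    have : (m * b 0 - n) * a 1 = (m * b 0 - n) * b 1 := by rw [hkeya, hkeyb]
    exact Nat.eq_of_mul_eq_mul_left hd this
  apply Subtype.ext
  funext i
  fin_cases i
  · exact h0
  · exact h1

theorem stmt_14 : ∀ ε : ℝ, 0 < ε → ∃ C : ℝ, 0 < C ∧
    ∀ m n : ℕ, 0 < m → 0 < n →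
      (numSols 2 m n : ℝ) ≤ C * (n : ℝ) ^ ε := by
  intro ε hε
  obtain ⟨C, hC, hbound⟩ := divisor_bound (ε / 2) (by linarith)
  refine ⟨C, hC, ?_⟩
  intro m n hm hn
  calc (numSols 2 m n : ℝ) ≤ (((n ^ 2).divisors.card : ℕ) : ℝ) := by
        exact_mod_cast numSols_le_divisors m n hm hn
    _ ≤ C * ((n ^ 2 : ℕ) : ℝ) ^ (ε / 2) := hbound (n ^ 2) (by positivity)
    _ = C * (n : ℝ) ^ ε := by
        have hpow : ((n ^ 2 : ℕ) : ℝ) ^ (ε / 2) = (n : ℝ) ^ ε := by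
          push_cast
          rw [← Real.rpow_natCast (n : ℝ) 2, ← Real.rpow_mul (Nat.cast_nonneg n)]
          norm_num
          rw [show (2 : ℝ) * (ε / 2) = ε by ring]
        rw [hpow]
end

section
/- For every ε > 0 there exists a constant C = C(ε) > 0 such that for all positive integers m and n, f₃(m,n) ≤ C · n^(1+ε)/m. -/
open Finset

/-- The equation `m / n = 1 / a + 1 / b + 1 / c` with denominators cleared. -/
abbrev IsEgyptianTriple (m n a b c : ℤ) : Prop :=
  m * a * b * c = n * (b * c + a * c + a * b)

def pivot (m n a b : ℤ) : ℤ := (m * a - n) * b - n * a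

namespace IsEgyptianTriple

variable {m n a b c : ℤ}

lemma pivot_mul_eq (h : IsEgyptianTriple m n a b c) : pivot m n a b * c = n * a * b := by
  unfold pivot; linear_combination h

lemma pivot_mul_eq_sq (h : IsEgyptianTriple m n a b c) :
    pivot m n a b * ((m * a - n) * c - n * a) = (n * a) ^ 2 := by
  unfold pivot; linear_combination (m * a - n) * h

lemma pivot_pos (h : IsEgyptianTriple m n a b c)
    (hn : 0 < n) (ha : 0 < a) (hb : 0 < b) (hc : 0 < c) : 0 < pivot m n a b :=
  pos_of_mul_pos_left (by rw [h.pivot_mul_eq]; positivity) hc.le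

lemma lt_mul (h : IsEgyptianTriple m n a b c)
    (hn : 0 < n) (ha : 0 < a) (hb : 0 < b) (hc : 0 < c) : n < m * a := by
  have hpiv := h.pivot_pos hn ha hb hc
  unfold pivot at hpiv
  exact sub_pos.1 (pos_of_mul_pos_left (by nlinarith) hb.le)

lemma mul_le_three_mul (h : IsEgyptianTriple m n a b c)
    (hn : 0 < n) (ha : 0 < a) (hab : a ≤ b) (hbc : b ≤ c) : m * a ≤ 3 * n := by
  have hac : a * c ≤ b * c := by nlinarith
  have hab' : a * b ≤ b * c := by nlinarith
  refine le_of_mul_le_mul_right ?_ (by nlinarith : 0 < b * c)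
  linear_combination h + n * hac + n * hab'

lemma eq_of_pivot_eq {b' c' : ℤ} (h : IsEgyptianTriple m n a b c)
    (h' : IsEgyptianTriple m n a b' c')
    (hn : 0 < n) (ha : 0 < a) (hb : 0 < b) (hc : 0 < c)
    (hpiv : pivot m n a b = pivot m n a b') : b = b' ∧ c = c' := by
  have hb' : b = b' := by
    unfold pivot at hpiv
    exact mul_left_cancel₀ (sub_pos.2 (h.lt_mul hn ha hb hc)).ne' (by linarith)
  subst hb'
  exact ⟨rfl, mul_left_cancel₀ (h.pivot_pos hn ha hb hc).ne'
    (h.pivot_mul_eq.trans h'.pivot_mul_eq.symm)⟩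

end IsEgyptianTriple

lemma isEgyptianTriple_of_div_eq_sum {m n : ℕ} {x : Fin 3 → ℕ} (hn : n ≠ 0) (hx : ∀ i, 0 < x i)
    (h : (m : ℚ) / n = ∑ i, (1 : ℚ) / x i) : IsEgyptianTriple m n (x 0) (x 1) (x 2) := by
  have := (hx 0).ne'; have := (hx 1).ne'; have := (hx 2).ne'
  unfold IsEgyptianTriple
  rw [Fin.sum_univ_three] at h
  field_simp at h
  exact_mod_cast (by linear_combination h :
    (m * x 0 * x 1 * x 2 : ℚ) = n * (x 1 * x 2 + x 0 * x 2 + x 0 * x 1))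

lemma succ_le_mul_pow {b : ℝ} (hb : 1 < b) (k : ℕ) :
    (k + 1 : ℝ) ≤ max 1 (b - 1)⁻¹ * b ^ k := by
  have bernoulli : 1 + k * (b - 1) ≤ b ^ k := by
    simpa using one_add_mul_le_pow (a := b - 1) (by linarith) k
  have hM : 1 ≤ max 1 (b - 1)⁻¹ := le_max_left _ _
  have hMb : 1 ≤ max 1 (b - 1)⁻¹ * (b - 1) := by
    calc 1 = (b - 1)⁻¹ * (b - 1) := (inv_mul_cancel₀ (by linarith)).symm
      _ ≤ _ := mul_le_mul_of_nonneg_right (le_max_right _ _) (by linarith)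
  nlinarith

lemma succ_le_mul_rpow_pow {ε p : ℝ} (hε : 0 < ε) (hp : 2 ≤ p) (k : ℕ) :
    (k + 1 : ℝ) ≤ max 1 ((2 : ℝ) ^ ε - 1)⁻¹ * (p ^ k) ^ ε := by
  rw [← Real.rpow_pow_comm (by linarith)]
  calc (k + 1 : ℝ) ≤ max 1 ((2 : ℝ) ^ ε - 1)⁻¹ * ((2 : ℝ) ^ ε) ^ k :=
        succ_le_mul_pow (Real.one_lt_rpow (by norm_num) hε) k
    _ ≤ _ := by gcongr

lemma succ_le_rpow_pow {ε p : ℝ} (hp0 : 0 ≤ p) (hp : 2 ≤ p ^ ε) (k : ℕ) :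
    (k + 1 : ℝ) ≤ (p ^ k) ^ ε := by
  rw [← Real.rpow_pow_comm hp0]
  calc (k + 1 : ℝ) ≤ 2 ^ k := by exact_mod_cast Nat.lt_two_pow_self
    _ ≤ (p ^ ε) ^ k := by gcongr

lemma prod_ite_lt_le_pow {M : ℝ} (hM : 1 ≤ M) (s : Finset ℕ) (P : ℕ) :
    ∏ p ∈ s, (if p < P then M else 1) ≤ M ^ P := by
  rw [prod_ite, prod_const_one, mul_one, prod_const]
  refine pow_le_pow_right₀ hM ((card_le_card fun p hp => ?_).trans (card_range P).le)
  exact mem_range.2 (mem_filter.1 hp).2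

lemma prod_primeFactors_rpow {N : ℕ} (hN : N ≠ 0) (ε : ℝ) :
    ∏ p ∈ N.primeFactors, ((p ^ N.factorization p : ℕ) : ℝ) ^ ε = (N : ℝ) ^ ε := by
  rw [Real.finsetProd_rpow _ _ fun p _ => by positivity, ← Nat.cast_prod,
    ← Nat.prod_primeFactors_pow_factorization hN]

theorem exists_card_divisors_le_mul_rpow {ε : ℝ} (hε : 0 < ε) :
    ∃ C > 0, ∀ N : ℕ, N ≠ 0 → (#N.divisors : ℝ) ≤ C * (N : ℝ) ^ ε := by
  set M := max 1 ((2 : ℝ) ^ ε - 1)⁻¹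
  have hM : 1 ≤ M := le_max_left _ _
  set P := ⌈(2 : ℝ) ^ ε⁻¹⌉₊
  -- `P ≥ 2 ^ ε⁻¹`, so a prime `p ≥ P` has `p ^ ε ≥ 2` and needs no extra factor
  have local_bound : ∀ p : ℕ, p.Prime → ∀ k : ℕ,
      (k + 1 : ℝ) ≤ (if p < P then M else 1) * ((p ^ k : ℕ) : ℝ) ^ ε := by
    intro p hp k
    have hp2 : (2 : ℝ) ≤ p := by exact_mod_cast hp.two_le
    push_cast
    split_ifs with hpP
    · exact succ_le_mul_rpow_pow hε hp2 k
    · rw [one_mul]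
      refine succ_le_rpow_pow (by positivity) ?_ k
      rw [← Real.rpow_inv_le_iff_of_pos (by norm_num) (by positivity) hε]
      exact (Nat.le_ceil _).trans (by exact_mod_cast not_lt.1 hpP)
  refine ⟨M ^ P, by positivity, fun N hN => ?_⟩
  calc (#N.divisors : ℝ) = ∏ p ∈ N.primeFactors, ((N.factorization p : ℝ) + 1) := by
        rw [Nat.card_divisors hN]; push_cast; rfl
    _ ≤ ∏ p ∈ N.primeFactors,
          (if p < P then M else 1) * ((p ^ N.factorization p : ℕ) : ℝ) ^ ε :=
        prod_le_prod (fun _ _ => by positivity)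
          fun p hp => local_bound p (Nat.prime_of_mem_primeFactors hp) _
    _ ≤ M ^ P * (N : ℝ) ^ ε := by
        rw [prod_mul_distrib, prod_primeFactors_rpow hN]
        gcongr
        exact prod_ite_lt_le_pow hM _ P

lemma numSols_three_le_sum_card_divisors {m n : ℕ} (hm : 0 < m) (hn : 0 < n) :
    numSols 3 m n ≤ ∑ a ∈ Icc 1 (3 * n / m), #((n * a) ^ 2).divisors := by
  set S := {x : Fin 3 → ℕ | (∀ i, 0 < x i) ∧ Monotone x ∧
    (m : ℚ) / n = ∑ i, (1 : ℚ) / x i}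
  set T := (Icc 1 (3 * n / m)).sigma fun a =>
    ((n * a) ^ 2).divisors.map (Nat.castEmbedding : ℕ ↪ ℤ)
  have pos : ∀ x ∈ S, ∀ i, (0 : ℤ) < x i := fun x hx i => by exact_mod_cast hx.1 i
  have clear_denoms : ∀ x ∈ S, IsEgyptianTriple m n (x 0) (x 1) (x 2) := fun x hx =>
    isEgyptianTriple_of_div_eq_sum hn.ne' hx.1 hx.2.2
  let key : (Fin 3 → ℕ) → (_ : ℕ) × ℤ := fun x => ⟨x 0, pivot m n (x 0) (x 1)⟩
  have key_mem : ∀ x ∈ S, key x ∈ T := by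
    intro x hx
    have hZ := clear_denoms x hx
    have hpiv := hZ.pivot_pos (by positivity) (pos x hx 0) (pos x hx 1) (pos x hx 2)
    have hle := hZ.mul_le_three_mul (by positivity) (pos x hx 0)
      (by exact_mod_cast hx.2.1 (show (0 : Fin 3) ≤ 1 by decide))
      (by exact_mod_cast hx.2.1 (show (1 : Fin 3) ≤ 2 by decide))
    simp only [T, key, mem_sigma, mem_Icc, mem_map, Nat.mem_divisors, Nat.castEmbedding_apply]
    refine ⟨⟨hx.1 0, (Nat.le_div_iff_mul_le hm).2 (by rw [mul_comm]; exact_mod_cast hle)⟩,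
      _, ⟨?_, pow_ne_zero 2 (Nat.mul_ne_zero hn.ne' (hx.1 0).ne')⟩,
      Int.toNat_of_nonneg hpiv.le⟩
    rw [← Int.natCast_dvd_natCast, Int.toNat_of_nonneg hpiv.le]
    exact ⟨_, by push_cast; exact hZ.pivot_mul_eq_sq.symm⟩
  have key_injOn : Set.InjOn key S := by
    intro x hx y hy hxy
    simp only [key, Sigma.mk.injEq, heq_eq_eq] at hxy
    obtain ⟨h0, hpiv⟩ := hxy
    have hZx := clear_denoms x hx
    rw [h0] at hZx hpiv
    obtain ⟨h1, h2⟩ := hZx.eq_of_pivot_eq (clear_denoms y hy) (by positivity)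
      (pos y hy 0) (pos x hx 1) (pos x hx 2) hpiv
    funext i
    fin_cases i
    · exact h0
    · exact_mod_cast h1
    · exact_mod_cast h2
  calc numSols 3 m n = S.ncard := Nat.card_coe_set_eq S
    _ ≤ (T : Set _).ncard := Set.ncard_le_ncard_of_injOn key key_mem key_injOn T.finite_toSet
    _ = _ := by simp only [T, Set.ncard_coe_finset, card_sigma, card_map]

lemma card_divisors_mul_sq_le {ε C : ℝ} (hε : 0 ≤ ε) (hC : 0 ≤ C)
    (hdiv : ∀ N : ℕ, N ≠ 0 → (#N.divisors : ℝ) ≤ C * (N : ℝ) ^ (ε / 4))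
    {n a : ℕ} (hn : n ≠ 0) (ha : a ≠ 0) (han : a ≤ 3 * n) :
    (#((n * a) ^ 2).divisors : ℝ) ≤ C * (3 * n : ℝ) ^ ε := by
  have hN : (n * a) ^ 2 ≤ (3 * n) ^ 4 := by
    calc (n * a) ^ 2 ≤ (3 * n * (3 * n)) ^ 2 := by gcongr; omega
      _ = (3 * n) ^ 4 := by ring
  calc (#((n * a) ^ 2).divisors : ℝ) ≤ C * (((n * a) ^ 2 : ℕ) : ℝ) ^ (ε / 4) :=
        hdiv _ (pow_ne_zero 2 (Nat.mul_ne_zero hn ha))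
    _ ≤ C * (((3 * n) ^ 4 : ℕ) : ℝ) ^ (ε / 4) := by gcongr
    _ = C * (3 * n : ℝ) ^ ε := by
        rw [Nat.cast_pow, ← Real.rpow_natCast, ← Real.rpow_mul (by positivity)]
        push_cast
        ring_nf

theorem stmt_15 : ∀ ε : ℝ, 0 < ε → ∃ C : ℝ, 0 < C ∧
    ∀ m n : ℕ, 0 < m → 0 < n →
      (numSols 3 m n : ℝ) ≤ C * (n : ℝ) ^ (1 + ε) / (m : ℝ) := by
  intro ε hε
  obtain ⟨C, hC, hdiv⟩ := exists_card_divisors_le_mul_rpow (ε := ε / 4) (by positivity)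
  refine ⟨C * 3 ^ (1 + ε), by positivity, fun m n hm hn => ?_⟩
  have hterm : ∀ a ∈ Icc 1 (3 * n / m),
      (#((n * a) ^ 2).divisors : ℝ) ≤ C * (3 * n : ℝ) ^ ε := fun a ha =>
    card_divisors_mul_sq_le hε.le hC.le hdiv hn.ne' (Nat.one_le_iff_ne_zero.1 (mem_Icc.1 ha).1)
      ((mem_Icc.1 ha).2.trans (Nat.div_le_self _ _))
  calc (numSols 3 m n : ℝ)
      ≤ ∑ a ∈ Icc 1 (3 * n / m), (#((n * a) ^ 2).divisors : ℝ) := by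
        exact_mod_cast numSols_three_le_sum_card_divisors hm hn
    _ ≤ (3 * n / m : ℕ) * (C * (3 * n : ℝ) ^ ε) := by
        simpa using sum_le_card_nsmul _ _ _ hterm
    _ ≤ (3 * n / m : ℝ) * (C * (3 * n : ℝ) ^ ε) := by
        gcongr; exact_mod_cast Nat.cast_div_le
    _ = C * 3 ^ (1 + ε) * (n : ℝ) ^ (1 + ε) / m := by
        rw [Real.rpow_add (by positivity), Real.rpow_add (by positivity),
          Real.mul_rpow (by positivity) (by positivity), Real.rpow_one, Real.rpow_one]
        ring
end

section
/- For every ε > 0 there exists a constant C = C(ε) > 0 such that for all positive integers m and n, f₄(m,n) ≤ C · n^(3+ε)/m². -/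
/-!
Order a solution as a₀ ≤ a₁ ≤ a₂ ≤ a₃. Then m/n ≤ 4/a₀ gives a₀ ≤ 4n/m. The positive fraction
m/n - 1/a₀ has denominator n a₀, so it is at least 1/(n a₀); it is also at most 3/a₁, whence
a₁ ≤ 3n a₀. Once a₀, a₁ are fixed, 1/a₂ + 1/a₃ = q/N with N = n a₀ a₁ and q ∈ ℤ, which is
equivalent to (q a₂ - N)(q a₃ - N) = N²: the pair (a₂, a₃) is determined by a divisor of N².
The divisor bound #divisors k ≤ C_δ k^δ then gives f₄(m,n) ≪ (4n/m) · (12n²/m) · n^ε.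
-/

open Finset

lemma succ_le_pow_of_two_le {x : ℝ} (hx : 2 ≤ x) (a : ℕ) : (a + 1 : ℝ) ≤ x ^ a :=
  calc (a + 1 : ℝ) ≤ 2 ^ a := by exact_mod_cast Nat.lt_two_pow_self
    _ ≤ x ^ a := pow_le_pow_left₀ zero_le_two hx a

lemma succ_le_div_sub_one_mul_pow {x : ℝ} (hx : 1 < x) (a : ℕ) :
    (a + 1 : ℝ) ≤ x / (x - 1) * x ^ a := by
  have bernoulli := one_add_mul_le_pow (a := x - 1) (by linarith) (a + 1)
  rw [add_sub_cancel, Nat.cast_succ] at bernoulli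
  rw [div_mul_eq_mul_div, le_div_iff₀ (by linarith), ← pow_succ']
  linarith

lemma succ_le_mul_rpow_pow_s16 {δ : ℝ} (hδ : 0 < δ) {p : ℕ} (hp : 2 ≤ p) (a : ℕ) :
    (a + 1 : ℝ) ≤
      (if p < ⌈(2 : ℝ) ^ δ⁻¹⌉₊ then 2 ^ δ / (2 ^ δ - 1) else 1) * ((p : ℝ) ^ δ) ^ a := by
  split_ifs with hsmall
  · have h2δ : (1 : ℝ) < 2 ^ δ := Real.one_lt_rpow one_lt_two hδ
    calc (a + 1 : ℝ) ≤ 2 ^ δ / (2 ^ δ - 1) * (2 ^ δ) ^ a := succ_le_div_sub_one_mul_pow h2δ a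
      _ ≤ 2 ^ δ / (2 ^ δ - 1) * ((p : ℝ) ^ δ) ^ a := by
        gcongr
        exact_mod_cast hp
  · rw [one_mul]
    refine succ_le_pow_of_two_le ?_ a
    calc (2 : ℝ) = (2 ^ δ⁻¹) ^ δ := (Real.rpow_inv_rpow zero_le_two hδ.ne').symm
      _ ≤ (p : ℝ) ^ δ := by
        gcongr
        exact (Nat.ceil_le.mp (not_lt.mp hsmall))

theorem Nat.exists_card_divisors_le_mul_rpow {δ : ℝ} (hδ : 0 < δ) :
    ∃ C : ℝ, 0 < C ∧ ∀ k : ℕ, k ≠ 0 → (#k.divisors : ℝ) ≤ C * (k : ℝ) ^ δ := by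
  set M : ℝ := 2 ^ δ / (2 ^ δ - 1)
  set N := ⌈(2 : ℝ) ^ δ⁻¹⌉₊
  have hM : 1 ≤ M := by
    have h2δ : (1 : ℝ) < 2 ^ δ := Real.one_lt_rpow one_lt_two hδ
    rw [le_div_iff₀ (by linarith)]
    linarith
  refine ⟨M ^ N, by positivity, fun k hk => ?_⟩
  have hk_rpow : (k : ℝ) ^ δ = ∏ p ∈ k.primeFactors, ((p : ℝ) ^ δ) ^ k.factorization p := by
    conv_lhs => rw [← Nat.prod_factorization_pow_eq_self hk]
    rw [Nat.cast_finsuppProd, Finsupp.prod, ← Real.finsetProd_rpow _ _ (fun _ _ => by positivity)]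
    refine prod_congr rfl fun p _ => ?_
    rw [Nat.cast_pow, Real.rpow_pow_comm (Nat.cast_nonneg p)]
  have hsmall : ∏ p ∈ k.primeFactors, (if p < N then M else 1) ≤ M ^ N := by
    rw [← prod_filter, prod_const]
    refine pow_le_pow_right₀ hM ((card_le_card fun p hp => ?_).trans (card_range N).le)
    exact mem_range.mpr (mem_filter.mp hp).2
  calc (#k.divisors : ℝ) = ∏ p ∈ k.primeFactors, ((k.factorization p : ℝ) + 1) := by
        rw [Nat.card_divisors hk]; push_cast; rfl
    _ ≤ ∏ p ∈ k.primeFactors, (if p < N then M else 1) * ((p : ℝ) ^ δ) ^ k.factorization p :=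
        prod_le_prod (fun _ _ => by positivity)
          fun p hp => succ_le_mul_rpow_pow_s16 hδ (Nat.prime_of_mem_primeFactors hp).two_le _
    _ ≤ M ^ N * (k : ℝ) ^ δ := by
        rw [prod_mul_distrib, hk_rpow]
        exact mul_le_mul_of_nonneg_right hsmall (by positivity)

lemma one_div_mul_le_sub_of_lt {p q r s : ℕ} (hq : 0 < q) (hs : 0 < s)
    (h : (p : ℚ) / q < r / s) : 1 / (q * s) ≤ (r : ℚ) / s - p / q := by
  rw [div_lt_div_iff₀ (by positivity) (by positivity)] at h
  have hgap : (1 : ℚ) ≤ r * q - s * p := by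
    have : p * s + 1 ≤ r * q := by exact_mod_cast h
    rw [le_sub_iff_add_le', mul_comm]
    exact_mod_cast this
  rw [div_sub_div _ _ (by positivity) (by positivity), mul_comm (q : ℚ)]
  exact div_le_div_of_nonneg_right hgap (by positivity)

lemma mul_sub_mul_mul_sub_eq_sq {q : ℤ} {N c d : ℕ} (hN : 0 < N) (hc : 0 < c) (hd : 0 < d)
    (h : (q : ℚ) / N = 1 / c + 1 / d) :
    0 < q ∧ (N : ℤ) < q * c ∧ (q * c - N) * (q * d - N) = N ^ 2 := by
  have hcq : (0 : ℚ) < c := by exact_mod_cast hc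
  have hdq : (0 : ℚ) < d := by exact_mod_cast hd
  have hNq : (0 : ℚ) < N := by exact_mod_cast hN
  rw [div_eq_iff hNq.ne'] at h
  have hq : (0 : ℚ) < q := by rw [h]; positivity
  have hlt : (N : ℚ) < q * c := by
    rw [h]; field_simp; nlinarith
  refine ⟨by exact_mod_cast hq, by exact_mod_cast hlt, ?_⟩
  have : ((q * c - N) * (q * d - N) : ℚ) = N ^ 2 := by
    rw [h]; field_simp; ring
  exact_mod_cast this

section FourTerms

variable {m n a b c d : ℕ}

lemma mul_le_four_mul_of_eq_sum_one_div (hn : 0 < n) (ha : 0 < a) (hab : a ≤ b) (hbc : b ≤ c)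
    (hcd : c ≤ d) (h : (m : ℚ) / n = 1 / a + 1 / b + 1 / c + 1 / d) : m * a ≤ 4 * n := by
  have ha' : (0 : ℚ) < a := by exact_mod_cast ha
  have : (m : ℚ) / n ≤ 4 / a :=
    calc (m : ℚ) / n ≤ 1 / a + 1 / a + 1 / a + 1 / a := by
          rw [h]; gcongr <;> exact_mod_cast by omega
      _ = 4 / a := by ring
  rw [div_le_div_iff₀ (by positivity) ha'] at this
  exact_mod_cast this

lemma le_three_mul_mul_of_eq_sum_one_div (hn : 0 < n) (ha : 0 < a) (hab : a ≤ b) (hbc : b ≤ c)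
    (hcd : c ≤ d) (h : (m : ℚ) / n = 1 / a + 1 / b + 1 / c + 1 / d) : b ≤ 3 * n * a := by
  have hb' : (0 : ℚ) < b := by exact_mod_cast ha.trans_le hab
  have hpos : (0 : ℚ) < 1 / b + 1 / c + 1 / d := by
    have : 0 < b := by omega
    have : 0 < c := by omega
    have : 0 < d := by omega
    positivity
  have hlt : ((1 : ℕ) : ℚ) / a < m / n := by rw [h, Nat.cast_one]; linarith
  have : 1 / (a * n : ℚ) ≤ 3 / b :=
    calc 1 / (a * n : ℚ) ≤ m / n - 1 / a := by
          simpa using one_div_mul_le_sub_of_lt ha hn hlt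
      _ = 1 / b + 1 / c + 1 / d := by rw [h]; ring
      _ ≤ 1 / b + 1 / b + 1 / b := by gcongr; exact_mod_cast hbc.trans hcd
      _ = 3 / b := by ring
  rw [div_le_div_iff₀ (by positivity) hb'] at this
  have : (b : ℚ) ≤ 3 * n * a := by linarith
  exact_mod_cast this

lemma mul_sub_mul_mul_sub_eq_sq_of_eq_sum_one_div (hn : 0 < n) (ha : 0 < a) (hb : 0 < b)
    (hc : 0 < c) (hd : 0 < d) (h : (m : ℚ) / n = 1 / a + 1 / b + 1 / c + 1 / d) :
    0 < (m * a * b - n * b - n * a : ℤ) ∧ (n * a * b : ℤ) < (m * a * b - n * b - n * a) * c ∧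
      ((m * a * b - n * b - n * a) * c - n * a * b) * ((m * a * b - n * b - n * a) * d - n * a * b)
        = (n * a * b : ℤ) ^ 2 := by
  have htail : ((m * a * b - n * b - n * a : ℤ) : ℚ) / (n * a * b : ℕ) = 1 / c + 1 / d := by
    rw [show (1 : ℚ) / c + 1 / d = m / n - 1 / a - 1 / b by rw [h]; ring]
    push_cast
    field_simp
  exact_mod_cast mul_sub_mul_mul_sub_eq_sq (by positivity) hc hd htail

end FourTerms

lemma numSols_four_tuple_spec {m n : ℕ} {a : Fin 4 → ℕ}
    (h : (∀ i, 0 < a i) ∧ Monotone a ∧ (m : ℚ) / n = ∑ i, (1 : ℚ) / a i) :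
    0 < a 0 ∧ a 0 ≤ a 1 ∧ a 1 ≤ a 2 ∧ a 2 ≤ a 3 ∧
      (m : ℚ) / n = 1 / a 0 + 1 / a 1 + 1 / a 2 + 1 / a 3 := by
  obtain ⟨hpos, hmono, hsum⟩ := h
  exact ⟨hpos 0, hmono (by decide), hmono (by decide), hmono (by decide),
    by rw [hsum, Fin.sum_univ_four]⟩

theorem numSols_four_le_sum {m n : ℕ} (hm : 0 < m) (hn : 0 < n) :
    numSols 4 m n ≤ ∑ x ∈ Icc 1 (4 * n / m) ×ˢ Icc 1 (3 * n * (4 * n / m)),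
      #((n * x.1 * x.2) ^ 2).divisors := by
  rw [← card_sigma, numSols, ← Nat.card_eq_finsetCard]
  let code : (Fin 4 → ℕ) → (_ : ℕ × ℕ) × ℕ := fun a =>
    ⟨(a 0, a 1), ((m * a 0 * a 1 - n * a 1 - n * a 0 : ℤ) * a 2 - n * a 0 * a 1).toNat⟩
  have code_mem : ∀ a : {a : Fin 4 → ℕ // (∀ i, 0 < a i) ∧ Monotone a ∧
      (m : ℚ) / n = ∑ i, (1 : ℚ) / a i},
      code a.1 ∈ (Icc 1 (4 * n / m) ×ˢ Icc 1 (3 * n * (4 * n / m))).sigma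
        fun x => ((n * x.1 * x.2) ^ 2).divisors := by
    rintro ⟨a, ha⟩
    obtain ⟨h0, h01, h12, h23, hsum⟩ := numSols_four_tuple_spec ha
    obtain ⟨-, hlt, hprod⟩ :=
      mul_sub_mul_mul_sub_eq_sq_of_eq_sum_one_div hn h0 (by omega) (by omega) (by omega) hsum
    have hA : a 0 ≤ 4 * n / m := (Nat.le_div_iff_mul_le hm).mpr (by
      rw [mul_comm]; exact mul_le_four_mul_of_eq_sum_one_div hn h0 h01 h12 h23 hsum)
    have h1 : 0 < a 1 := h0.trans_le h01
    simp only [code, mem_sigma, mem_product, mem_Icc, Nat.mem_divisors]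
    refine ⟨⟨⟨h0, hA⟩, h1,
      (le_three_mul_mul_of_eq_sum_one_div hn h0 h01 h12 h23 hsum).trans (by gcongr)⟩,
      ?_, by positivity⟩
    rw [← Int.natCast_dvd_natCast, Int.toNat_of_nonneg (by linarith)]
    push_cast
    exact Dvd.intro _ hprod
  refine Nat.card_le_card_of_injective (fun a => ⟨code a.1, code_mem a⟩) ?_
  rintro ⟨a, ha⟩ ⟨b, hb⟩ hab
  obtain ⟨ha0, ha01, ha12, ha23, hsuma⟩ := numSols_four_tuple_spec ha
  obtain ⟨hb0, hb01, hb12, hb23, hsumb⟩ := numSols_four_tuple_spec hb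
  simp only [code, Subtype.mk.injEq, Sigma.mk.inj_iff, Prod.mk.injEq, heq_eq_eq] at hab
  obtain ⟨⟨h0, h1⟩, hd⟩ := hab
  obtain ⟨hq, hlta, -⟩ :=
    mul_sub_mul_mul_sub_eq_sq_of_eq_sum_one_div hn ha0 (by omega) (by omega) (by omega) hsuma
  obtain ⟨-, hltb, -⟩ :=
    mul_sub_mul_mul_sub_eq_sq_of_eq_sum_one_div hn hb0 (by omega) (by omega) (by omega) hsumb
  rw [h0, h1] at hd hq hlta
  have h2 : a 2 = b 2 := by
    have := congrArg ((↑) : ℕ → ℤ) hd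
    rw [Int.toNat_of_nonneg (by linarith), Int.toNat_of_nonneg (by linarith)] at this
    exact_mod_cast mul_left_cancel₀ hq.ne' (sub_left_inj.mp this)
  have h3 : a 3 = b 3 := by
    rw [h0, h1, h2] at hsuma
    have : (1 : ℚ) / a 3 = 1 / b 3 := by linarith
    simpa using this
  congr
  funext i
  fin_cases i <;> assumption

theorem numSols_four_le_mul_rpow {m n : ℕ} (hm : 0 < m) (hn : 0 < n) {C δ : ℝ} (hδ : 0 ≤ δ)
    (hC : ∀ k : ℕ, k ≠ 0 → (#k.divisors : ℝ) ≤ C * (k : ℝ) ^ δ) :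
    (numSols 4 m n : ℝ) ≤ 48 * (n : ℝ) ^ 3 / (m : ℝ) ^ 2 * (C * (2304 * (n : ℝ) ^ 8) ^ δ) := by
  set A := 4 * n / m
  have hC0 : 0 ≤ C := by
    have h1 := hC 1 one_ne_zero
    simp only [Nat.divisors_one, card_singleton, Nat.cast_one, Real.one_rpow, mul_one] at h1
    linarith
  have hA : A ≤ 4 * n := Nat.div_le_self _ _
  have hAR : (A : ℝ) ≤ 4 * n / m := Nat.cast_div_le.trans (by push_cast; rfl)
  have hterm : ∀ x ∈ Icc 1 A ×ˢ Icc 1 (3 * n * A),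
      (#((n * x.1 * x.2) ^ 2).divisors : ℝ) ≤ C * (2304 * (n : ℝ) ^ 8) ^ δ := by
    rintro ⟨x₁, x₂⟩ hx
    simp only [mem_product, mem_Icc] at hx
    have hx₂ : x₂ ≤ 3 * n * (4 * n) := hx.2.2.trans (by gcongr)
    have hk : (n * x₁ * x₂) ^ 2 ≤ 2304 * n ^ 8 :=
      calc (n * x₁ * x₂) ^ 2 ≤ (n * (4 * n) * (3 * n * (4 * n))) ^ 2 := by
            gcongr; exact hx.1.2.trans hA
        _ = 2304 * n ^ 8 := by ring
    refine (hC _ (by have := hx.1.1; have := hx.2.1; positivity)).trans ?_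
    gcongr
    exact_mod_cast hk
  calc (numSols 4 m n : ℝ)
      ≤ ∑ x ∈ Icc 1 A ×ˢ Icc 1 (3 * n * A), (#((n * x.1 * x.2) ^ 2).divisors : ℝ) := by
        exact_mod_cast numSols_four_le_sum hm hn
    _ ≤ #(Icc 1 A ×ˢ Icc 1 (3 * n * A)) • (C * (2304 * (n : ℝ) ^ 8) ^ δ) :=
        sum_le_card_nsmul _ _ _ hterm
    _ = A * (3 * n * A) * (C * (2304 * (n : ℝ) ^ 8) ^ δ) := by
        simp [card_product, nsmul_eq_mul]
    _ ≤ 4 * n / m * (3 * n * (4 * n / m)) * (C * (2304 * (n : ℝ) ^ 8) ^ δ) := by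
        gcongr
    _ = 48 * (n : ℝ) ^ 3 / (m : ℝ) ^ 2 * (C * (2304 * (n : ℝ) ^ 8) ^ δ) := by ring

theorem stmt_16 : ∀ ε : ℝ, 0 < ε → ∃ C : ℝ, 0 < C ∧
    ∀ m n : ℕ, 0 < m → 0 < n →
      (numSols 4 m n : ℝ) ≤ C * (n : ℝ) ^ (3 + ε) / (m : ℝ) ^ 2 := by
  intro ε hε
  obtain ⟨C, hC0, hC⟩ := Nat.exists_card_divisors_le_mul_rpow (δ := ε / 8) (by positivity)
  refine ⟨48 * C * 2304 ^ (ε / 8), by positivity, fun m n hm hn => ?_⟩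
  have hn' : (0 : ℝ) < n := by exact_mod_cast hn
  calc (numSols 4 m n : ℝ)
      ≤ 48 * (n : ℝ) ^ 3 / (m : ℝ) ^ 2 * (C * (2304 * (n : ℝ) ^ 8) ^ (ε / 8)) :=
        numSols_four_le_mul_rpow hm hn (by positivity) hC
    _ = 48 * C * 2304 ^ (ε / 8) * (n : ℝ) ^ (3 + ε) / (m : ℝ) ^ 2 := by
        rw [Real.mul_rpow (by norm_num) (by positivity), ← Real.rpow_natCast_mul hn'.le,
          show ((8 : ℕ) : ℝ) * (ε / 8) = ε by push_cast; ring, Real.rpow_add hn',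
          Real.rpow_ofNat]
        ring
end

section
/- Let k ≥ 1 and let m, n, a₁, …, a_k be positive integers with a₁ ≤ a₂ ≤ … ≤ a_k and m/n = 1/a₁ + 1/a₂ + … + 1/a_k. Define the finite sequence (α_i)_{1 ≤ i ≤ k} by α₁ = k and α_i = (k − i + 1) · ∏_{j < i} α_j for 2 ≤ i ≤ k. Then a_i ≤ α_i · n^(2^(i−1)) for every 1 ≤ i ≤ k. -/
/-- The sequence `α` (0-indexed): `α 0 = k` and, for `i ≥ 1`,
`α i = (k - i) * ∏_{j < i} α j`, corresponding to the 1-indexed definition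
`α₁ = k`, `α_i = (k - i + 1) * ∏_{j < i} α_j`. -/
def alphaSeq (k : ℕ) : ℕ → ℕ
  | 0 => k
  | i + 1 => (k - (i + 1)) * ∏ j ∈ (Finset.range (i + 1)).attach, alphaSeq k j.1
  decreasing_by exact Finset.mem_range.mp j.2

/-!
Since `a` is monotone, `a i` is the smallest term of the tail `T = ∑_{j ≥ i} 1 / a j`.
This tail is `m / n - ∑_{j < i} 1 / a j`, a positive rational whose denominator divides
`n ∏_{j < i} a j`, so `1 ≤ T n ∏_{j < i} a j`; and `T ≤ (k - i) / a i`. Hence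
`a i ≤ (k - i) n ∏_{j < i} a j`, and strong induction on `i`, together with
`n ∏_{j < i} n ^ 2 ^ j = n ^ 2 ^ i`, turns this recursive bound into `a i ≤ α i n ^ 2 ^ i`.
-/

open Finset

theorem Finset.sum_one_div_mul_prod {ι K : Type*} [DecidableEq ι] [Field K] {s : Finset ι}
    {a : ι → K} (ha : ∀ j ∈ s, a j ≠ 0) :
    (∑ j ∈ s, 1 / a j) * ∏ j ∈ s, a j = ∑ j ∈ s, ∏ l ∈ s.erase j, a l := by
  rw [sum_mul]
  refine sum_congr rfl fun j hj => ?_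
  rw [← mul_prod_erase s a hj]
  field_simp [ha j hj]

section EgyptianFraction

variable {ι : Type*} [Fintype ι] {m n : ℕ} {a : ι → ℕ}

theorem exists_int_sum_compl_one_div_mul_prod [DecidableEq ι] (hn : 0 < n) (ha : ∀ j, 0 < a j)
    (heq : (m : ℚ) / n = ∑ j, (1 : ℚ) / a j) (s : Finset ι) :
    ∃ z : ℤ, (∑ j ∈ sᶜ, (1 : ℚ) / a j) * (n * ∏ j ∈ s, (a j : ℚ)) = z := by
  refine ⟨m * ∏ j ∈ s, (a j : ℤ) - n * ∑ j ∈ s, ∏ l ∈ s.erase j, (a l : ℤ), ?_⟩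
  have hsum : ∑ j ∈ sᶜ, (1 : ℚ) / a j = m / n - ∑ j ∈ s, (1 : ℚ) / a j := by
    rw [heq, ← sum_add_sum_compl s]; ring
  have hclear := sum_one_div_mul_prod (s := s) (a := fun j => (a j : ℚ))
    fun j _ => by exact_mod_cast (ha j).ne'
  push_cast
  rw [hsum, ← hclear]
  field_simp

theorem le_card_compl_mul_prod [DecidableEq ι] (hn : 0 < n) (ha : ∀ j, 0 < a j)
    (heq : (m : ℚ) / n = ∑ j, (1 : ℚ) / a j) {s : Finset ι} {i : ι} (hi : i ∉ s)
    (hmin : ∀ j ∉ s, a i ≤ a j) :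
    a i ≤ #sᶜ * (n * ∏ j ∈ s, a j) := by
  set T := ∑ j ∈ sᶜ, (1 : ℚ) / a j
  set P := (n : ℚ) * ∏ j ∈ s, (a j : ℚ) with hP_def
  have haQ : ∀ j, (0 : ℚ) < a j := fun j => by exact_mod_cast ha j
  have hP_pos : 0 < P := mul_pos (by exact_mod_cast hn) (prod_pos fun j _ => haQ j)
  have hT_pos : 0 < T := sum_pos (fun j _ => one_div_pos.mpr (haQ j)) ⟨i, mem_compl.mpr hi⟩
  have hTP : 1 ≤ T * P := by
    obtain ⟨z, hz⟩ := exists_int_sum_compl_one_div_mul_prod hn ha heq s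
    have : (0 : ℚ) < z := hz ▸ mul_pos hT_pos hP_pos
    rw [hz]
    exact_mod_cast (show (0 : ℤ) < z by exact_mod_cast this)
  have hTle : T ≤ #sᶜ * (1 / a i) := by
    rw [← nsmul_eq_mul, ← sum_const]
    refine sum_le_sum fun j hj => one_div_le_one_div_of_le (haQ i) ?_
    exact_mod_cast hmin j (mem_compl.mp hj)
  have : (a i : ℚ) ≤ #sᶜ * P := by
    calc (a i : ℚ) ≤ T * P * a i := le_mul_of_one_le_left (haQ i).le hTP
      _ ≤ #sᶜ * (1 / a i) * P * a i := by gcongr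
      _ = #sᶜ * P := by field_simp [(haQ i).ne']
  rw [hP_def] at this
  exact_mod_cast this

end EgyptianFraction

theorem Fin.le_card_Ici_mul_prod_Iio {k m n : ℕ} {a : Fin k → ℕ} (hn : 0 < n) (ha : ∀ j, 0 < a j)
    (hmono : Monotone a) (heq : (m : ℚ) / n = ∑ j, (1 : ℚ) / a j) (i : Fin k) :
    a i ≤ (k - i) * (n * ∏ j ∈ Iio i, a j) := by
  have hcompl : (Iio i)ᶜ = Ici i := by ext; simp
  have := le_card_compl_mul_prod hn ha heq (s := Iio i) (i := i) (by simp)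
    fun j hj => hmono (by simpa using hj)
  rwa [hcompl, Fin.card_Ici] at this

theorem alphaSeq_succ (k i : ℕ) :
    alphaSeq k (i + 1) = (k - (i + 1)) * ∏ j ∈ range (i + 1), alphaSeq k j := by
  rw [alphaSeq, prod_attach]

theorem mul_prod_range_pow_two_pow (n i : ℕ) : n * ∏ j ∈ range i, n ^ 2 ^ j = n ^ 2 ^ i := by
  induction i with
  | zero => simp
  | succ i ih => rw [prod_range_succ, ← mul_assoc, ih, ← pow_add, pow_succ, mul_two]

theorem sub_mul_mul_prod_alphaSeq_mul_pow (k n i : ℕ) :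
    (k - i) * (n * ∏ j ∈ range i, alphaSeq k j * n ^ 2 ^ j) = alphaSeq k i * n ^ 2 ^ i := by
  rw [prod_mul_distrib, mul_left_comm n, mul_prod_range_pow_two_pow, ← mul_assoc]
  cases i with
  | zero => simp [alphaSeq]
  | succ i => rw [alphaSeq_succ]

theorem Fin.le_alphaSeq_mul_pow {k n : ℕ} {a : Fin k → ℕ}
    (h : ∀ i, a i ≤ (k - i) * (n * ∏ j ∈ Iio i, a j)) (i : Fin k) :
    a i ≤ alphaSeq k i * n ^ 2 ^ (i : ℕ) := by
  induction i using Fin.strong_induction_on with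
  | h i ih =>
    calc a i ≤ (k - i) * (n * ∏ j ∈ Iio i, a j) := h i
      _ ≤ (k - i) * (n * ∏ j ∈ Iio i, alphaSeq k j * n ^ 2 ^ (j : ℕ)) := by
        gcongr with j hj
        exact ih j (mem_Iio.mp hj)
      _ = alphaSeq k i * n ^ 2 ^ (i : ℕ) := by
        rw [← sub_mul_mul_prod_alphaSeq_mul_pow, ← Nat.Iio_eq_range, ← Fin.map_valEmbedding_Iio,
          prod_map]
        rfl

theorem stmt_19_general (k : ℕ) (m n : ℕ) (hn : 0 < n)
    (a : Fin k → ℕ) (ha : ∀ i, 0 < a i) (hmono : Monotone a)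
    (heq : (m : ℚ) / n = ∑ i, (1 : ℚ) / a i) :
    ∀ i : Fin k, a i ≤ alphaSeq k i * n ^ 2 ^ (i : ℕ) :=
  Fin.le_alphaSeq_mul_pow (Fin.le_card_Ici_mul_prod_Iio hn ha hmono heq)

theorem stmt_19 (k : ℕ) (hk : 1 ≤ k) (m n : ℕ) (hm : 0 < m) (hn : 0 < n)
    (a : Fin k → ℕ) (ha : ∀ i, 0 < a i) (hmono : Monotone a)
    (heq : (m : ℚ) / n = ∑ i, (1 : ℚ) / a i) :
    ∀ i : Fin k, a i ≤ alphaSeq k i * n ^ 2 ^ (i : ℕ) :=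
  stmt_19_general k m n hn a ha hmono heq
end
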